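/- If P is symmetric positive semidefinite and R is symmetric positive definite, then the stationary filtered covariance P_f = P - P Cᵀ (C P Cᵀ + R)⁻¹ C P is positive semidefinite. -/
import Mathlib

open Matrix

private lemma aux_filter_identity {n m : ℕ}
    (P : Matrix (Fin n) (Fin n) ℝ) (C : Matrix (Fin m) (Fin n) ℝ)
    (Ct K : Matrix (Fin n) (Fin m) ℝ) (L : Matrix (Fin m) (Fin n) ℝ)
    (S : Matrix (Fin m) (Fin m) ℝ) (h1 : K * S = P * Ct) :
    P - K * (C * P) = (1 - K * C) * P * (1 - Ct * L) + K * (S - C * P * Ct) * L := by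
  have e : (1 - K * C) * P * (1 - Ct * L) + K * (S - C * P * Ct) * L
      = P - K * (C * P) - P * Ct * L + K * S * L := by
    simp only [Matrix.mul_sub, Matrix.sub_mul, Matrix.mul_one, Matrix.one_mul,
      Matrix.mul_assoc]
    abel
  rw [e, h1]
  noncomm_ring

theorem stationary_filtered_covariance_posSemidef {n m : ℕ}
    (P : Matrix (Fin n) (Fin n) ℝ) (C : Matrix (Fin m) (Fin n) ℝ)
    (R : Matrix (Fin m) (Fin m) ℝ)
    (hP : P.PosSemidef) (hR : R.PosDef) :
    (P - P * Cᵀ * (C * P * Cᵀ + R)⁻¹ * C * P).PosSemidef := by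
  have hCt : Cᴴ = Cᵀ := rfl
  set S := C * P * Cᵀ + R with hSdef
  have hCPCt : (C * P * Cᵀ).PosSemidef := by
    have := hP.mul_mul_conjTranspose_same C
    rwa [hCt] at this
  have hS : S.PosDef := Matrix.PosDef.posSemidef_add hCPCt hR
  have hSsymm : Sᵀ = S := hS.isHermitian
  have hUnit : IsUnit S.det := (isUnit_iff_isUnit_det _).1 hS.isUnit
  have hinv2 : S⁻¹ * S = 1 := nonsing_inv_mul _ hUnit
  have hinvT : S⁻¹ᵀ = S⁻¹ := by rw [transpose_nonsing_inv, hSsymm]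
  have hPsymm : Pᵀ = P := hP.isHermitian
  have hRid : R = S - C * P * Cᵀ := by rw [hSdef, add_sub_cancel_left]
  have h1 : (P * Cᵀ * S⁻¹) * S = P * Cᵀ := by
    rw [Matrix.mul_assoc (P * Cᵀ) S⁻¹ S, hinv2, Matrix.mul_one]
  have key := aux_filter_identity P C Cᵀ (P * Cᵀ * S⁻¹) (S⁻¹ * (C * P)) S h1
  have hKT : (P * Cᵀ * S⁻¹ * C)ᴴ = Cᵀ * (S⁻¹ * (C * P)) := by
    show (P * Cᵀ * S⁻¹ * C)ᵀ = _
    simp [transpose_mul, hinvT, hPsymm, Matrix.mul_assoc]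
  have goalEq : P - P * Cᵀ * S⁻¹ * C * P
      = (1 - P * Cᵀ * S⁻¹ * C) * P * (1 - P * Cᵀ * S⁻¹ * C)ᴴ
        + (P * Cᵀ * S⁻¹) * R * (P * Cᵀ * S⁻¹)ᴴ := by
    rw [hRid]
    have hKTc : ((1 : Matrix (Fin n) (Fin n) ℝ) - P * Cᵀ * S⁻¹ * C)ᴴ
        = 1 - Cᵀ * (S⁻¹ * (C * P)) := by
      rw [conjTranspose_sub, conjTranspose_one, hKT]
    have hKc : (P * Cᵀ * S⁻¹)ᴴ = S⁻¹ * (C * P) := by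
      show (P * Cᵀ * S⁻¹)ᵀ = _
      simp [transpose_mul, hinvT, hPsymm, Matrix.mul_assoc]
    rw [hKTc, hKc]
    simp only [Matrix.mul_assoc] at key ⊢
    exact key
  rw [goalEq]
  exact (hP.mul_mul_conjTranspose_same _).add (hR.posSemidef.mul_mul_conjTranspose_same _)
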